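/- With notation as in the unipotent parametrization: let g be an isometry with g(e) = e, g(w_j) = w_j + a_j e for some rationals a_j, and g(u) = c e + q w_j + u with q ≠ 0 and (w_j, w_j) < 0. If the row vector a^t were zero, then g^k(u) = k(c e + q w_j) + u for all k ≥ 1, and comparing (u,u) = (g^k u, g^k u) would yield (w_j,w_j) q^2 k + 2(c + q(w_j,u)) = 0 for all k ≥ 1, which is impossible. Hence the row vector a^t is nonzero for some generator. -/
import Mathlib


open Matrix

def eVec (r : ℕ) : Fin (r + 2) → ℚ := fun j => if j = 0 then 1 else 0

def wVec (r : ℕ) (i : Fin r) : Fin (r + 2) → ℚ := fun j => if j = i.succ.castSucc then 1 else 0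

def uVec (r : ℕ) : Fin (r + 2) → ℚ := fun j => if j = Fin.last (r + 1) then 1 else 0

/-- In the basis `(e, w₁, …, w_r, u)` with `(e,e) = 0`, `(e,wᵢ) = 0`, `(wⱼ,wⱼ) < 0`,
`(e,u) = 1`: there is no isometry `g` with `g e = e`, `g wᵢ = wᵢ` for all `i`
(vanishing row vector `aᵗ`) and `g u = c e + q w_j + u` with `q ≠ 0`.  Indeed then
`g^k u = k (c e + q w_j) + u` and `(u,u) = (g^k u, g^k u)` would give
`(w_j,w_j) q² k + 2 (c + q (w_j,u)) = 0` for all `k ≥ 1`, which is impossible. -/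
theorem no_unipotent_with_zero_a_row
    (r : ℕ) (Q : Matrix (Fin (r + 2)) (Fin (r + 2)) ℚ)
    (hQsymm : Qᵀ = Q)
    (hee : Q 0 0 = 0)
    (hew : ∀ i : Fin r, Q 0 i.succ.castSucc = 0)
    (heu : Q 0 (Fin.last (r + 1)) = 1)
    (j : Fin r) (hww : Q j.succ.castSucc j.succ.castSucc < 0)
    (g : Matrix (Fin (r + 2)) (Fin (r + 2)) ℚ) (hgiso : gᵀ * Q * g = Q)
    (hge : g.mulVec (eVec r) = eVec r)
    (hgw : ∀ i : Fin r, g.mulVec (wVec r i) = wVec r i)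
    (c q : ℚ) (hq : q ≠ 0)
    (hgu : g.mulVec (uVec r) = c • eVec r + q • wVec r j + uVec r) :
    False := by
  -- invariance of the bilinear form
  have key : ∀ x y : Fin (r + 2) → ℚ,
      (g.mulVec x) ⬝ᵥ Q.mulVec (g.mulVec y) = x ⬝ᵥ Q.mulVec y := by
    intro x y
    have h := congrArg (fun M : Matrix (Fin (r + 2)) (Fin (r + 2)) ℚ => x ⬝ᵥ M.mulVec y) hgiso
    simp only [← Matrix.mulVec_mulVec, Matrix.dotProduct_mulVec (A := gᵀ),
      Matrix.vecMul_transpose] at h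
    exact h
  -- compute basic pairings
  have hBew : eVec r ⬝ᵥ Q.mulVec (wVec r j) = Q 0 j.succ.castSucc := by
    simp [eVec, wVec, dotProduct, Matrix.mulVec, Finset.sum_ite_eq']
  have hBww : wVec r j ⬝ᵥ Q.mulVec (wVec r j) = Q j.succ.castSucc j.succ.castSucc := by
    simp [wVec, dotProduct, Matrix.mulVec, Finset.sum_ite_eq']
  have h := key (uVec r) (wVec r j)
  rw [hgu, hgw j] at h
  simp only [add_dotProduct, smul_dotProduct, smul_eq_mul] at h
  rw [hBew, hBww, hew j] at h
  have : q * Q j.succ.castSucc j.succ.castSucc = 0 := by linarith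
  rcases mul_eq_zero.mp this with h' | h'
  · exact hq h'
  · exact absurd h' (ne_of_lt hww)
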